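/- If X is a star-K-Scheepers space and Y is a σ-compact space, then X × Y is star-K-Scheepers. -/

import Mathlib

open Set

/-- Star of a set `A` with respect to a family `P`: `St(A,P) = ⋃{B ∈ P : A ∩ B ≠ ∅}`. -/
def st {X : Type*} (A : Set X) (P : Set (Set X)) : Set X :=
  ⋃₀ {B | B ∈ P ∧ (A ∩ B).Nonempty}

/-- `U` is an open cover of the space. -/
def IsOpenCover {X : Type*} [TopologicalSpace X] (U : Set (Set X)) : Prop :=
  (∀ V ∈ U, IsOpen V) ∧ ⋃₀ U = Set.univ

/-- An ω-cover: an open cover such that every finite subset lies in some member. -/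
def IsOmegaCover {X : Type*} [TopologicalSpace X] (U : Set (Set X)) : Prop :=
  IsOpenCover U ∧ ∀ F : Set X, F.Finite → ∃ V ∈ U, F ⊆ V

/-- The star-K-Scheepers property. -/
def StarKScheepers (X : Type*) [TopologicalSpace X] : Prop :=
  ∀ U : ℕ → Set (Set X), (∀ n, IsOpenCover (U n)) →
    ∃ K : ℕ → Set X, (∀ n, IsCompact (K n)) ∧
      IsOmegaCover {S | ∃ n, S = st (K n) (U n)}

/-!
Over a compact `C ⊆ Y`, an open cover `U` of `X × Y` induces the open cover of `X` by the
sets `V` whose tube `V ×ˢ C` is covered by finitely many members of `U`, each of which meets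
every slice `{a} ×ˢ C` with `a ∈ V` (the tube lemma and compactness of slices give such a
neighbourhood of every point). The star of a compact `K` in this cover, times `C`, lies in the
star of `K ×ˢ C` in `U`, so `X` star-K-Scheepers makes `X × C` star-K-Scheepers. For
σ-compact `Y`, split the sequence of covers into countably many subsequences, one for each
member `Cₘ` of the increasing compact covering; a finite subset of `X × Y` lies over some `Cₘ`.
-/

theorem isOpen_st {X : Type*} [TopologicalSpace X] (A : Set X) {P : Set (Set X)}
    (hP : ∀ V ∈ P, IsOpen V) : IsOpen (st A P) :=
  isOpen_sUnion fun V hV => hP V hV.1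

theorem isOmegaCover_of_forall_finite {X : Type*} [TopologicalSpace X] {U : Set (Set X)}
    (hUo : ∀ V ∈ U, IsOpen V) (hU : ∀ F : Set X, F.Finite → ∃ V ∈ U, F ⊆ V) :
    IsOmegaCover U := by
  refine ⟨⟨hUo, eq_univ_of_forall fun x => ?_⟩, hU⟩
  obtain ⟨V, hVU, hxV⟩ := hU {x} (finite_singleton x)
  exact ⟨V, hVU, hxV rfl⟩

theorem Set.Finite.exists_subset_compactCovering {Y : Type*} [TopologicalSpace Y]
    [SigmaCompactSpace Y] {F : Set Y} (hF : F.Finite) : ∃ m, F ⊆ compactCovering Y m := by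
  have hmono : Monotone (compactCovering Y) := fun _ _ h => compactCovering_subset Y h
  simpa using hmono.directed_le.exists_mem_subset_of_finset_subset_biUnion
    (s := hF.toFinset) (by simp [iUnion_compactCovering])

theorem IsCompact.exists_finite_subcover_of_forall_inter_nonempty {X : Type*}
    [TopologicalSpace X] {s : Set X} (hs : IsCompact s) {U : Set (Set X)}
    (hUo : ∀ V ∈ U, IsOpen V) (hsU : s ⊆ ⋃₀ U) :
    ∃ G ⊆ U, G.Finite ∧ s ⊆ ⋃₀ G ∧ ∀ W ∈ G, (W ∩ s).Nonempty := by
  obtain ⟨G, hGU, hGfin, hsG⟩ :=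
    hs.elim_finite_subcover_image (c := id) hUo (by simpa [← sUnion_eq_biUnion] using hsU)
  refine ⟨{W ∈ G | (W ∩ s).Nonempty}, fun W hW => hGU hW.1, hGfin.sep _, fun x hx => ?_,
    fun W hW => hW.2⟩
  obtain ⟨W, hWG, hxW⟩ := mem_iUnion₂.1 (hsG hx)
  exact ⟨W, ⟨hWG, x, hxW, hx⟩, hxW⟩

theorem isOpen_image_fst_inter_univ_prod {X Y : Type*} [TopologicalSpace X]
    [TopologicalSpace Y] {W : Set (X × Y)} (hW : IsOpen W) (C : Set Y) :
    IsOpen (Prod.fst '' (W ∩ univ ×ˢ C)) := by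
  have h_eq : Prod.fst '' (W ∩ univ ×ˢ C) = ⋃ c ∈ C, (fun a => (a, c)) ⁻¹' W := by
    ext a
    simp [and_comm]
  rw [h_eq]
  exact isOpen_biUnion fun c _ => hW.preimage (Continuous.prodMk_left c)

section TubeCover

variable {X Y : Type*} [TopologicalSpace X]

def tubeCover (U : Set (Set (X × Y))) (C : Set Y) : Set (Set X) :=
  {V | IsOpen V ∧ ∃ G ⊆ U, G.Finite ∧
    V ×ˢ C ⊆ ⋃₀ G ∧ ∀ W ∈ G, V ⊆ Prod.fst '' (W ∩ univ ×ˢ C)}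

theorem isOpenCover_tubeCover [TopologicalSpace Y] {U : Set (Set (X × Y))}
    (hU : IsOpenCover U) {C : Set Y} (hC : IsCompact C) : IsOpenCover (tubeCover U C) := by
  refine ⟨fun V hV => hV.1, eq_univ_of_forall fun x => ?_⟩
  obtain ⟨G, hGU, hGfin, hxG, hGx⟩ :=
    ((isCompact_singleton (x := x)).prod hC).exists_finite_subcover_of_forall_inter_nonempty hU.1
      (by rw [hU.2]; exact subset_univ _)
  have hGo : ∀ W ∈ G, IsOpen W := fun W hW => hU.1 W (hGU hW)
  obtain ⟨u, v, hu, -, hxu, hCv, huv⟩ :=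
    generalized_tube_lemma isCompact_singleton hC (isOpen_sUnion hGo) hxG
  have hx_image : ∀ W ∈ G, x ∈ Prod.fst '' (W ∩ univ ×ˢ C) := by
    rintro W hW
    obtain ⟨p, hpW, rfl, hpC⟩ := hGx W hW
    exact ⟨p, ⟨hpW, trivial, hpC⟩, rfl⟩
  refine ⟨u ∩ ⋂ W ∈ G, Prod.fst '' (W ∩ univ ×ˢ C), ⟨?_, G, hGU, hGfin, ?_, ?_⟩,
    ⟨hxu rfl, mem_iInter₂.2 hx_image⟩⟩
  · exact hu.inter <|
      hGfin.isOpen_biInter fun W hW => isOpen_image_fst_inter_univ_prod (hGo W hW) C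
  · exact (prod_mono inter_subset_left hCv).trans huv
  · exact fun W hW => inter_subset_right.trans (biInter_subset_of_mem hW)

theorem st_tubeCover_prod_subset (U : Set (Set (X × Y))) (C : Set Y) (K : Set X) :
    st K (tubeCover U C) ×ˢ C ⊆ st (K ×ˢ C) U := by
  rintro ⟨a, y⟩ ⟨⟨V, ⟨⟨-, G, hGU, -, hGcov, hGmeet⟩, k, hkK, hkV⟩, haV⟩, hy⟩
  obtain ⟨W, hWG, hW⟩ := hGcov (show (a, y) ∈ V ×ˢ C from ⟨haV, hy⟩)
  obtain ⟨p, ⟨hpW, -, hpC⟩, rfl⟩ := hGmeet W hWG hkV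
  exact ⟨W, ⟨hGU hWG, p, ⟨hkK, hpC⟩, hpW⟩, hW⟩

theorem StarKScheepers.exists_prod_subset_st_prod [TopologicalSpace Y] (hX : StarKScheepers X)
    {U : ℕ → Set (Set (X × Y))} (hU : ∀ n, IsOpenCover (U n)) {C : Set Y} (hC : IsCompact C) :
    ∃ K : ℕ → Set X, (∀ n, IsCompact (K n)) ∧
      ∀ F : Set X, F.Finite → ∃ n, F ×ˢ C ⊆ st (K n ×ˢ C) (U n) := by
  obtain ⟨K, hK, -, hKω⟩ := hX (fun n => tubeCover (U n) C)
    (fun n => isOpenCover_tubeCover (hU n) hC)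
  refine ⟨K, hK, fun F hF => ?_⟩
  obtain ⟨-, ⟨n, rfl⟩, hFn⟩ := hKω F hF
  exact ⟨n, (prod_mono_left hFn).trans (st_tubeCover_prod_subset _ _ _)⟩

end TubeCover

/-- The product of a star-K-Scheepers space with a σ-compact space is star-K-Scheepers. -/
theorem starKScheepers_prod_sigmaCompact {X Y : Type*} [TopologicalSpace X]
    [TopologicalSpace Y] [SigmaCompactSpace Y] (hX : StarKScheepers X) :
    StarKScheepers (X × Y) := by
  intro U hU
  choose K hK hKst using fun m => hX.exists_prod_subset_st_prod (fun j => hU (Nat.pair m j))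
    (isCompact_compactCovering Y m)
  refine ⟨fun n => K n.unpair.1 n.unpair.2 ×ˢ compactCovering Y n.unpair.1,
    fun n => (hK _ _).prod (isCompact_compactCovering Y _),
    isOmegaCover_of_forall_finite ?_ fun F hF => ?_⟩
  · rintro _ ⟨n, rfl⟩
    exact isOpen_st _ (hU n).1
  · obtain ⟨m, hm⟩ := (hF.image Prod.snd).exists_subset_compactCovering
    obtain ⟨j, hj⟩ := hKst m _ (hF.image Prod.fst)
    refine ⟨_, ⟨Nat.pair m j, rfl⟩, ?_⟩
    simpa only [Nat.unpair_pair] using subset_prod.trans ((prod_mono_right hm).trans hj)
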